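/- arXiv:2406.17211 — 4 statements merged into one kernel-verified Lean document; each statement's English description precedes it below -/
import Mathlib

section
/- For ν > -1 and μ = -1, there exists C > 0 such that for all t ≥ 0, ∫₀ᵗ (t-s)^ν (1+s)^{-1} ds ≤ C (1+t)^ν log(e+t). -/
open MeasureTheory

private lemma aux_int (ν : ℝ) (hν : -1 < ν) (t a b : ℝ) :
    IntervalIntegrable (fun s => (t - s) ^ ν) volume a b := by
  have h := (intervalIntegral.intervalIntegrable_rpow' (a := t - a) (b := t - b) hν).comp_sub_left t
  simpa using h

private lemma aux_cont (a b : ℝ) (ha : 0 ≤ a) (hb : 0 ≤ b) :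
    ContinuousOn (fun s : ℝ => (1 + s) ^ (-1 : ℝ)) (Set.uIcc a b) := by
  apply ContinuousOn.rpow_const (by fun_prop)
  intro x hx
  left
  have h1 : min a b ≤ x := hx.1
  have : (0:ℝ) ≤ min a b := le_min ha hb
  intro h; nlinarith

private lemma aux_int2 (ν : ℝ) (hν : -1 < ν) (t a b : ℝ) (ha : 0 ≤ a) (hb : 0 ≤ b) :
    IntervalIntegrable (fun s => (t - s) ^ ν * (1 + s) ^ (-1 : ℝ)) volume a b :=
  (aux_int ν hν t a b).mul_continuousOn (aux_cont a b ha hb)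

private lemma aux_J (ν : ℝ) (hν : -1 < ν) (t a b : ℝ) :
    ∫ s in a..b, (t - s) ^ ν = ((t - a) ^ (ν + 1) - (t - b) ^ (ν + 1)) / (ν + 1) := by
  rw [intervalIntegral.integral_comp_sub_left (fun x => x ^ ν) t,
    integral_rpow (Or.inl hν)]

private lemma aux_L (a b : ℝ) (ha : 0 ≤ a) (hb : 0 ≤ b) :
    ∫ s in a..b, (1 + s) ^ (-1 : ℝ) = Real.log ((1 + b) / (1 + a)) := by
  simp_rw [Real.rpow_neg_one, ← one_div]
  rw [intervalIntegral.integral_comp_add_left (fun x => 1 / x) 1]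
  exact integral_one_div (Set.notMem_uIcc_of_lt (by linarith) (by linarith))

theorem stmt_2 (ν : ℝ) (hν : ν > -1) :
    ∃ C > 0, ∀ t : ℝ, 0 ≤ t →
      ∫ s in (0:ℝ)..t, (t - s) ^ ν * (1 + s) ^ (-1 : ℝ) ≤
        C * (1 + t) ^ ν * Real.log (Real.exp 1 + t) := by
  have hν1 : (0:ℝ) < ν + 1 := by linarith
  set m : ℝ := min 1 ((3:ℝ) ^ ν) with hm_def
  set K : ℝ := max 1 ((3:ℝ) ^ (-ν)) with hK_def
  have hm : 0 < m := lt_min one_pos (Real.rpow_pos_of_pos (by norm_num) ν)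
  have hK : (1:ℝ) ≤ K := le_max_left _ _
  set A : ℝ := (3:ℝ) ^ (ν + 1) / ((ν + 1) * m) with hA_def
  have hA : 0 < A := div_pos (Real.rpow_pos_of_pos (by norm_num) _) (mul_pos hν1 hm)
  set B : ℝ := 2 / (ν + 1) with hB_def
  have hB : 0 < B := by positivity
  refine ⟨A + K + B, by positivity, ?_⟩
  intro t ht
  have h1t : (0:ℝ) < 1 + t := by linarith
  have he : (2:ℝ) ≤ Real.exp 1 := by nlinarith [Real.add_one_le_exp (1:ℝ)]
  have hlog : 1 ≤ Real.log (Real.exp 1 + t) := by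
    have h := Real.log_le_log (Real.exp_pos 1) (le_add_of_nonneg_right ht)
    rwa [Real.log_exp] at h
  have hpt : (0:ℝ) < (1 + t) ^ ν := Real.rpow_pos_of_pos h1t ν
  rcases le_total t 2 with h2 | h2
  · -- small t
    have hb1 : (∫ s in (0:ℝ)..t, (t - s) ^ ν * (1 + s) ^ (-1 : ℝ)) ≤
        ∫ s in (0:ℝ)..t, (t - s) ^ ν := by
      apply intervalIntegral.integral_mono_on ht (aux_int2 ν hν t 0 t le_rfl ht)
        (aux_int ν hν t 0 t)
      intro x hx
      have h1 : (1 + x) ^ (-1 : ℝ) ≤ 1 := by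
        rw [Real.rpow_neg_one, ← one_div, div_le_one (by linarith [hx.1])]
        linarith [hx.1]
      calc (t - x) ^ ν * (1 + x) ^ (-1 : ℝ) ≤ (t - x) ^ ν * 1 :=
            mul_le_mul_of_nonneg_left h1 (Real.rpow_nonneg (by linarith [hx.2]) ν)
        _ = (t - x) ^ ν := mul_one _
    rw [aux_J ν hν] at hb1
    have h0r : (t - t) ^ (ν + 1) = 0 := by
      rw [sub_self, Real.zero_rpow hν1.ne']
    rw [h0r, sub_zero, sub_zero] at hb1
    have hb2 : t ^ (ν + 1) ≤ (3:ℝ) ^ (ν + 1) :=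
      Real.rpow_le_rpow ht (by linarith) hν1.le
    have hmt : m ≤ (1 + t) ^ ν := by
      rcases le_or_gt 0 ν with h | h
      · refine le_trans (min_le_left _ _) ?_
        have := Real.one_le_rpow (by linarith : (1:ℝ) ≤ 1 + t) h
        linarith
      · exact le_trans (min_le_right _ _)
          (Real.rpow_le_rpow_of_nonpos h1t (by linarith) h.le)
    have key : t ^ (ν + 1) / (ν + 1) ≤ (A + K + B) * (1 + t) ^ ν * Real.log (Real.exp 1 + t) := by
      have hAm : A * m = (3:ℝ) ^ (ν + 1) / (ν + 1) := by
        rw [hA_def]; field_simp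
      have h3 : A * m * 1 ≤ A * (1 + t) ^ ν * Real.log (Real.exp 1 + t) := by
        apply mul_le_mul (mul_le_mul_of_nonneg_left hmt hA.le) hlog zero_le_one
        positivity
      rw [hAm] at h3
      have h4 : t ^ (ν + 1) / (ν + 1) ≤ (3:ℝ) ^ (ν + 1) / (ν + 1) := by gcongr
      nlinarith [mul_pos hpt (lt_of_lt_of_le one_pos hlog), hB, hK]
    linarith
  · -- large t
    have h0h : (0:ℝ) ≤ t / 2 := by linarith
    have hth : t / 2 ≤ t := by linarith
    have hsplit : (∫ s in (0:ℝ)..t, (t - s) ^ ν * (1 + s) ^ (-1 : ℝ)) =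
        (∫ s in (0:ℝ)..t/2, (t - s) ^ ν * (1 + s) ^ (-1 : ℝ)) +
        ∫ s in (t/2)..t, (t - s) ^ ν * (1 + s) ^ (-1 : ℝ) :=
      (intervalIntegral.integral_add_adjacent_intervals
        (aux_int2 ν hν t 0 (t/2) le_rfl h0h) (aux_int2 ν hν t (t/2) t h0h (by linarith))).symm
    -- piece 1
    have hp1 : (∫ s in (0:ℝ)..t/2, (t - s) ^ ν * (1 + s) ^ (-1 : ℝ)) ≤
        K * (1 + t) ^ ν * Real.log (Real.exp 1 + t) := by
      have step : (∫ s in (0:ℝ)..t/2, (t - s) ^ ν * (1 + s) ^ (-1 : ℝ)) ≤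
          ∫ s in (0:ℝ)..t/2, (K * (1 + t) ^ ν) * (1 + s) ^ (-1 : ℝ) := by
        apply intervalIntegral.integral_mono_on h0h (aux_int2 ν hν t 0 (t/2) le_rfl h0h)
          (((aux_cont 0 (t/2) le_rfl h0h).intervalIntegrable).const_mul _)
        intro x hx
        have hxt : x ≤ t / 2 := hx.2
        have hx0 : 0 ≤ x := hx.1
        have hb : (t - x) ^ ν ≤ K * (1 + t) ^ ν := by
          rcases le_or_gt 0 ν with h | h
          · calc (t - x) ^ ν ≤ (1 + t) ^ ν :=
                  Real.rpow_le_rpow (by linarith) (by linarith) h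
              _ ≤ K * (1 + t) ^ ν := le_mul_of_one_le_left hpt.le hK
          · have h3 : (1 + t) / 3 ≤ t - x := by linarith
            have h4 : (0:ℝ) < (1 + t) / 3 := by linarith
            calc (t - x) ^ ν ≤ ((1 + t) / 3) ^ ν :=
                  Real.rpow_le_rpow_of_nonpos h4 h3 h.le
              _ = (3:ℝ) ^ (-ν) * (1 + t) ^ ν := by
                  rw [Real.div_rpow (by linarith) (by norm_num), Real.rpow_neg (by norm_num)]
                  ring
              _ ≤ K * (1 + t) ^ ν :=
                  mul_le_mul_of_nonneg_right (le_max_right _ _) hpt.le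
        exact mul_le_mul_of_nonneg_right hb (Real.rpow_nonneg (by linarith [hx.1]) _)
      rw [intervalIntegral.integral_const_mul, aux_L 0 (t/2) le_rfl h0h] at step
      have hlog2 : Real.log ((1 + t/2) / (1 + 0)) ≤ Real.log (Real.exp 1 + t) := by
        rw [add_zero, div_one]
        exact Real.log_le_log (by linarith) (by linarith)
      calc (∫ s in (0:ℝ)..t/2, (t - s) ^ ν * (1 + s) ^ (-1 : ℝ)) ≤
            K * (1 + t) ^ ν * Real.log ((1 + t/2) / (1 + 0)) := step
        _ ≤ K * (1 + t) ^ ν * Real.log (Real.exp 1 + t) := by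
            apply mul_le_mul_of_nonneg_left hlog2
            positivity
    -- piece 2
    have hp2 : (∫ s in (t/2)..t, (t - s) ^ ν * (1 + s) ^ (-1 : ℝ)) ≤
        B * (1 + t) ^ ν * Real.log (Real.exp 1 + t) := by
      have step : (∫ s in (t/2)..t, (t - s) ^ ν * (1 + s) ^ (-1 : ℝ)) ≤
          ∫ s in (t/2)..t, (t - s) ^ ν * (2 / (1 + t)) := by
        apply intervalIntegral.integral_mono_on hth (aux_int2 ν hν t (t/2) t h0h (by linarith))
          ((aux_int ν hν t (t/2) t).mul_const _)
        intro x hx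
        have hx1 : t / 2 ≤ x := hx.1
        have hinv : (1 + x) ^ (-1 : ℝ) ≤ 2 / (1 + t) := by
          rw [Real.rpow_neg_one, ← one_div, div_le_div_iff₀ (by linarith) h1t]
          linarith
        exact mul_le_mul_of_nonneg_left hinv (Real.rpow_nonneg (by linarith [hx.2]) ν)
      rw [intervalIntegral.integral_mul_const, aux_J ν hν] at step
      have h0r : (t - t) ^ (ν + 1) = 0 := by rw [sub_self, Real.zero_rpow hν1.ne']
      rw [h0r, sub_zero] at step
      have h5 : (t - t/2) ^ (ν + 1) ≤ (1 + t) ^ (ν + 1) :=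
        Real.rpow_le_rpow (by linarith) (by linarith) hν1.le
      have h6 : (1 + t) ^ (ν + 1) = (1 + t) ^ ν * (1 + t) := Real.rpow_add_one h1t.ne' ν
      have h7 : (t - t/2) ^ (ν + 1) / (ν + 1) * (2 / (1 + t)) ≤
          B * (1 + t) ^ ν := by
        rw [hB_def]
        rw [div_mul_div_comm, div_le_iff₀ (by positivity), ]
        have : (t - t/2) ^ (ν + 1) * 2 ≤ (1 + t) ^ (ν + 1) * 2 := by linarith
        calc (t - t/2) ^ (ν + 1) * 2 ≤ (1 + t) ^ (ν + 1) * 2 := this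
          _ = 2 / (ν + 1) * (1 + t) ^ ν * ((ν + 1) * (1 + t)) := by
              rw [h6]; field_simp
      have h8 : B * (1 + t) ^ ν ≤ B * (1 + t) ^ ν * Real.log (Real.exp 1 + t) := by
        nlinarith [mul_pos hB hpt]
      linarith
    rw [hsplit]
    have hrest : 0 ≤ A * ((1 + t) ^ ν * Real.log (Real.exp 1 + t)) := by positivity
    nlinarith [hp1, hp2]
end

section
/- Let h : [β,γ] → ℝ be C¹ and convex (or concave) with |h'(y)| ≥ λ > 0 for all y ∈ [β,γ]. Then there exists an absolute constant C > 0, independent of λ, β, γ and h, such that |∫_β^γ e^{i h(y)} dy| ≤ C/λ. -/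
/-!
Since `h` is convex or concave, `h'` is monotone, and by Darboux's theorem it has constant sign;
replacing `h` by `-h` (which conjugates the integral) we may assume `h' ≥ λ`. Write
`e^{ih} = ψ · (h' e^{ih})` with `ψ = 1 / h'`, a monotone function with values in `[0, 1/λ]`.
Over every subinterval `[c, d]`, `h' e^{ih}` integrates to `-i e^{ih} |_c^d`, of norm at most `2`.
By the layer-cake formula `ψ(y) = ∫_0^{1/λ} 1[t ≤ ψ(y)] dt` and Fubini, the integral is an
integral over `t ∈ [0, 1/λ]` of integrals of `h' e^{ih}` over the level sets `{ψ ≥ t}`, which are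
subintervals since `ψ` is monotone; hence it is at most `2/λ` (a second mean value theorem).
-/

open intervalIntegral MeasureTheory Set Complex

section SecondMeanValue

variable {E : Type*} [NormedAddCommGroup E] [NormedSpace ℝ E]

theorem exists_setIntegral_eq_intervalIntegral_of_ordConnected {s : Set ℝ} {a b : ℝ}
    (hab : a ≤ b) (hs : s.OrdConnected) (hsub : s ⊆ Icc a b) (f : ℝ → E) :
    ∃ c ∈ Icc a b, ∃ d ∈ Icc a b, ∫ y in s, f y = ∫ y in c..d, f y := by
  rcases s.eq_empty_or_nonempty with rfl | hne
  · exact ⟨a, left_mem_Icc.2 hab, a, left_mem_Icc.2 hab, by simp⟩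
  have hbdd : BddBelow s := bddBelow_Icc.mono hsub
  have hbdd' : BddAbove s := bddAbove_Icc.mono hsub
  have hle : sInf s ≤ sSup s := csInf_le_csSup hne hbdd hbdd'
  have ha : a ≤ sInf s := le_csInf hne fun y hy => (hsub hy).1
  have hb : sSup s ≤ b := csSup_le hne fun y hy => (hsub hy).2
  have hae : s =ᵐ[volume] Icc (sInf s) (sSup s) :=
    (subset_Icc_csInf_csSup hbdd hbdd').eventuallyLE.antisymm <| Ioo_ae_eq_Icc.symm.le.trans
      (IsConnected.Ioo_csInf_csSup_subset ⟨hne, hs.isPreconnected⟩ hbdd hbdd').eventuallyLE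
  refine ⟨sInf s, ⟨ha, hle.trans hb⟩, sSup s, ⟨ha.trans hle, hb⟩, ?_⟩
  rw [setIntegral_congr_set hae, integral_Icc_eq_integral_Ioc, integral_of_le hle]

theorem norm_integral_smul_le_of_monotone_or_antitone [CompleteSpace E] {ψ : ℝ → ℝ}
    {f : ℝ → E} {a b M A : ℝ} (hab : a ≤ b) (hψ : Monotone ψ ∨ Antitone ψ)
    (hψ0 : ∀ y, 0 ≤ ψ y) (hψM : ∀ y, ψ y ≤ M) (hf : IntegrableOn f (Ioc a b))
    (hA : ∀ c ∈ Icc a b, ∀ d ∈ Icc a b, ‖∫ y in c..d, f y‖ ≤ A) :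
    ‖∫ y in a..b, ψ y • f y‖ ≤ M * A := by
  have hψm : Measurable ψ := hψ.elim Monotone.measurable Antitone.measurable
  let F : ℝ → ℝ → E := fun y t => (Iic (ψ y)).indicator (fun _ => f y) t
  have hF : Integrable (Function.uncurry F)
      ((volume.restrict (Ioc a b)).prod (volume.restrict (Ioc 0 M))) :=
    (hf.comp_fst _).indicator (measurableSet_le measurable_snd (hψm.comp measurable_fst))
  have hF_t : ∀ y, ∫ t in Ioc 0 M, F y t = ψ y • f y := fun y => by
    rw [setIntegral_indicator measurableSet_Iic, Ioc_inter_Iic, inf_eq_right.2 (hψM y),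
      setIntegral_const, Real.volume_real_Ioc_of_le (hψ0 y), sub_zero]
  have hF_y : ∀ t, ‖∫ y in Ioc a b, F y t‖ ≤ A := fun t => by
    have hlevel : {y | t ≤ ψ y}.OrdConnected := hψ.elim
      (fun hm => ⟨fun _ hx _ _ _ hz => show t ≤ ψ _ from hx.trans (hm hz.1)⟩)
      (fun hm => ⟨fun _ _ _ hy _ hz => show t ≤ ψ _ from hy.trans (hm hz.2)⟩)
    obtain ⟨c, hc, d, hd, heq⟩ := exists_setIntegral_eq_intervalIntegral_of_ordConnected hab
      (ordConnected_Ioc.inter hlevel) (inter_subset_left.trans Ioc_subset_Icc_self) f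
    have hF_eq : ∀ y, F y t = {y | t ≤ ψ y}.indicator f y := fun y => rfl
    simp only [hF_eq, setIntegral_indicator (measurableSet_le measurable_const hψm), heq]
    exact hA c hc d hd
  calc ‖∫ y in a..b, ψ y • f y‖ = ‖∫ y in Ioc a b, ∫ t in Ioc 0 M, F y t‖ := by
        simp only [hF_t, integral_of_le hab]
    _ = ‖∫ t in Ioc 0 M, ∫ y in Ioc a b, F y t‖ := by rw [integral_integral_swap hF]
    _ ≤ A * volume.real (Ioc 0 M) :=
        norm_setIntegral_le_of_norm_le_const measure_Ioc_lt_top fun t _ => hF_y t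
    _ = M * A := by rw [Real.volume_real_Ioc_of_le ((hψ0 0).trans (hψM 0)), sub_zero, mul_comm]

end SecondMeanValue

theorem norm_integral_smul_exp_I_mul_le_two {h g : ℝ → ℝ} {c d : ℝ}
    (hh : ∀ y ∈ uIcc c d, HasDerivAt h (g y) y)
    (hint : IntervalIntegrable (fun y => g y • exp (I * h y)) volume c d) :
    ‖∫ y in c..d, g y • exp (I * h y)‖ ≤ 2 := by
  have hprim : ∀ y ∈ uIcc c d,
      HasDerivAt (fun y => -I * exp (I * h y)) (g y • exp (I * h y)) y := fun y hy => by
    refine (((hh y hy).ofReal_comp.const_mul I).cexp.const_mul (-I)).congr_deriv ?_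
    rw [real_smul]
    linear_combination -(g y * exp (I * h y)) * I_mul_I
  have hnorm : ∀ y, ‖-I * exp (I * h y)‖ = 1 := fun y => by
    rw [norm_mul, norm_neg, norm_I, one_mul, mul_comm, norm_exp_ofReal_mul_I]
  calc ‖∫ y in c..d, g y • exp (I * h y)‖
        = ‖-I * exp (I * h d) - -I * exp (I * h c)‖ := by
          rw [integral_eq_sub_of_hasDerivAt hprim hint]
    _ ≤ 2 := (norm_sub_le _ _).trans (by rw [hnorm, hnorm]; norm_num)

theorem norm_integral_exp_I_mul_le_of_le_deriv {h g : ℝ → ℝ} {β γ lam : ℝ} (hβγ : β ≤ γ)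
    (hlam : 0 < lam) (hh : ∀ y ∈ Icc β γ, HasDerivAt h (g y) y)
    (hg : MonotoneOn g (Icc β γ) ∨ AntitoneOn g (Icc β γ))
    (hlam_le : ∀ y ∈ Icc β γ, lam ≤ g y) :
    ‖∫ y in β..γ, exp (I * h y)‖ ≤ 2 / lam := by
  have hg_pos : ∀ y ∈ Icc β γ, 0 < g y := fun y hy => hlam.trans_le (hlam_le y hy)
  have hexp : ContinuousOn (fun y => exp (I * h y)) (Icc β γ) := fun y hy =>
    ((hh y hy).ofReal_comp.const_mul I).cexp.continuousAt.continuousWithinAt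
  have hint : IntegrableOn (fun y => g y • exp (I * h y)) (Icc β γ) :=
    (hg.elim (·.integrableOn_isCompact isCompact_Icc)
      (·.integrableOn_isCompact isCompact_Icc)).smul_continuousOn hexp isCompact_Icc
  let p : ℝ → Icc β γ := projIcc β γ hβγ
  let ψ : ℝ → ℝ := fun y => (g (p y))⁻¹
  have hψ : Monotone ψ ∨ Antitone ψ := hg.symm.imp
    (fun hm x y hxy => inv_anti₀ (hg_pos _ (p y).2)
      (hm (p x).2 (p y).2 (monotone_projIcc hβγ hxy)))
    (fun hm x y hxy => inv_anti₀ (hg_pos _ (p x).2)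
      (hm (p x).2 (p y).2 (monotone_projIcc hβγ hxy)))
  have heq : ∫ y in β..γ, exp (I * h y) = ∫ y in β..γ, ψ y • (g y • exp (I * h y)) := by
    refine integral_congr fun y hy => ?_
    rw [uIcc_of_le hβγ] at hy
    simp only [ψ, p, projIcc_of_mem hβγ hy, smul_smul, inv_mul_cancel₀ (hg_pos y hy).ne',
      one_smul]
  rw [heq, div_eq_inv_mul]
  refine norm_integral_smul_le_of_monotone_or_antitone hβγ hψ
    (fun y => inv_nonneg.2 (hg_pos _ (p y).2).le) (fun y => inv_anti₀ hlam (hlam_le _ (p y).2))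
    (hint.mono_set Ioc_subset_Icc_self) fun c hc d hd => ?_
  have hsub : uIcc c d ⊆ Icc β γ := uIcc_subset_Icc hc hd
  exact norm_integral_smul_exp_I_mul_le_two (fun y hy => hh y (hsub hy))
    (hint.mono_set hsub).intervalIntegrable

theorem forall_le_deriv_or_forall_le_neg_deriv {h : ℝ → ℝ} {s : Set ℝ} {lam : ℝ}
    (hs : Convex ℝ s) (hlam : 0 < lam) (hderiv : ∀ y ∈ s, lam ≤ |deriv h y|) :
    (∀ y ∈ s, lam ≤ deriv h y) ∨ ∀ y ∈ s, lam ≤ -deriv h y := by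
  have hne : ∀ y ∈ s, deriv h y ≠ 0 := fun y hy => abs_pos.1 (hlam.trans_le (hderiv y hy))
  rcases hasDerivWithinAt_forall_lt_or_forall_gt_of_forall_ne hs
    (fun y hy => (differentiableAt_of_deriv_ne_zero (hne y hy)).hasDerivAt.hasDerivWithinAt) hne
    with hneg | hpos
  · exact Or.inr fun y hy => (abs_of_neg (hneg y hy)).symm ▸ hderiv y hy
  · exact Or.inl fun y hy => (abs_of_pos (hpos y hy)).symm ▸ hderiv y hy

theorem norm_intervalIntegral_exp_I_mul_neg (h : ℝ → ℝ) (a b : ℝ) :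
    ‖∫ y in a..b, exp (I * ↑(-h y))‖ = ‖∫ y in a..b, exp (I * h y)‖ := by
  rw [← Complex.norm_conj, ← intervalIntegral_conj]
  congr 2 with y
  rw [← exp_conj]
  simp

theorem stmt_15 :
    ∃ C > 0, ∀ (h : ℝ → ℝ) (β γ lam : ℝ), β ≤ γ →
      ContDiffOn ℝ 1 h (Set.Icc β γ) →
      (ConvexOn ℝ (Set.Icc β γ) h ∨ ConcaveOn ℝ (Set.Icc β γ) h) →
      0 < lam → (∀ y ∈ Set.Icc β γ, lam ≤ |deriv h y|) →
      ‖∫ y in β..γ, Complex.exp (Complex.I * (h y : ℂ))‖ ≤ C / lam := by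
  refine ⟨2, two_pos, fun h β γ lam hβγ _ hconv hlam hderiv => ?_⟩
  have hdiff : ∀ y ∈ Icc β γ, DifferentiableAt ℝ h y := fun y hy =>
    differentiableAt_of_deriv_ne_zero (abs_pos.1 (hlam.trans_le (hderiv y hy)))
  have hmono : MonotoneOn (deriv h) (Icc β γ) ∨ AntitoneOn (deriv h) (Icc β γ) :=
    hconv.imp (·.monotoneOn_deriv hdiff) (·.antitoneOn_deriv hdiff)
  rcases forall_le_deriv_or_forall_le_neg_deriv (convex_Icc β γ) hlam hderiv with hpos | hneg
  · exact norm_integral_exp_I_mul_le_of_le_deriv hβγ hlam (fun y hy => (hdiff y hy).hasDerivAt)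
      hmono hpos
  · rw [← norm_intervalIntegral_exp_I_mul_neg]
    exact norm_integral_exp_I_mul_le_of_le_deriv hβγ hlam
      (fun y hy => (hdiff y hy).hasDerivAt.neg) (hmono.symm.imp AntitoneOn.neg MonotoneOn.neg)
      hneg
end

section
/- Let 0 < a < b be real numbers and t > 0, and suppose x ∈ ℝⁿ satisfies at < |x| < bt. If r₀ > 0 solves 2r₀³/√(1+r₀⁴) = |x|/t, then a/2 ≤ r₀ ≤ (b/2)·(4+a²)/a². -/
theorem stmt_17 (n : ℕ) (a b t : ℝ) (ha : 0 < a) (hab : a < b) (ht : 0 < t)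
    (x : EuclideanSpace ℝ (Fin n)) (hx1 : a * t < ‖x‖) (hx2 : ‖x‖ < b * t)
    (r₀ : ℝ) (hr₀ : 0 < r₀)
    (heq : 2 * r₀ ^ 3 / Real.sqrt (1 + r₀ ^ 4) = ‖x‖ / t) :
    a / 2 ≤ r₀ ∧ r₀ ≤ b / 2 * ((4 + a ^ 2) / a ^ 2) := by
  set s := Real.sqrt (1 + r₀ ^ 4) with hs
  have h1 : (0:ℝ) < 1 + r₀ ^ 4 := by positivity
  have hs0 : 0 < s := Real.sqrt_pos.mpr h1
  have hs2 : s ^ 2 = 1 + r₀ ^ 4 := Real.sq_sqrt h1.le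
  have hc : a < 2 * r₀ ^ 3 / s := by
    rw [heq, lt_div_iff₀ ht]; linarith
  have hc2 : 2 * r₀ ^ 3 / s < b := by
    rw [heq, div_lt_iff₀ ht]; linarith
  have hr2s : r₀ ^ 2 ≤ s := by nlinarith
  have hlow : a / 2 ≤ r₀ := by
    have h3 : 2 * r₀ ^ 3 / s ≤ 2 * r₀ := by
      rw [div_le_iff₀ hs0]; nlinarith
    linarith
  refine ⟨hlow, ?_⟩
  have ha2 : (0:ℝ) < a ^ 2 := by positivity
  have hr4 : a ^ 4 / 16 ≤ r₀ ^ 4 := by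
    have h4 := pow_le_pow_left₀ (by linarith : (0:ℝ) ≤ a / 2) hlow 4
    nlinarith [h4]
  have hK : s ≤ (4 + a ^ 2) / a ^ 2 * r₀ ^ 2 := by
    have hsq : s ^ 2 ≤ ((4 + a ^ 2) / a ^ 2 * r₀ ^ 2) ^ 2 := by
      rw [hs2, mul_pow, div_pow]
      rw [div_mul_eq_mul_div, le_div_iff₀ (by positivity)]
      nlinarith
    have hKpos : (0:ℝ) ≤ (4 + a ^ 2) / a ^ 2 * r₀ ^ 2 := by positivity
    nlinarith [hs0.le, hKpos]
  have h2r3 : 2 * r₀ ^ 3 < b * s := by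
    rw [div_lt_iff₀ hs0] at hc2; linarith
  have hb : 0 < b := lt_trans ha hab
  have : 2 * r₀ ^ 3 < b * ((4 + a ^ 2) / a ^ 2 * r₀ ^ 2) := by
    calc 2 * r₀ ^ 3 < b * s := h2r3
      _ ≤ _ := by nlinarith
  nlinarith [sq_nonneg r₀]
end

section
/- Let 0 < a < b with b ≤ √2 a³/(4+a²), let t > 0 and x ∈ ℝⁿ with at ≤ |x| ≤ bt, and let r₀ > 0 satisfy 2r₀³/√(1+r₀⁴) = |x|/t. Then √(1+r₀⁴) - (|x|/t) r₀ is bounded away from zero by a positive constant depending only on a and b. -/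
set_option maxHeartbeats 1000000


theorem stmt_18 (n : ℕ) (a b : ℝ) (ha : 0 < a) (hab : a < b)
    (hb : b ≤ Real.sqrt 2 * a ^ 3 / (4 + a ^ 2)) :
    ∃ c > 0, ∀ (t : ℝ) (x : EuclideanSpace ℝ (Fin n)) (r₀ : ℝ), 0 < t →
      a * t ≤ ‖x‖ → ‖x‖ ≤ b * t → 0 < r₀ →
      2 * r₀ ^ 3 / Real.sqrt (1 + r₀ ^ 4) = ‖x‖ / t →
      c ≤ |Real.sqrt (1 + r₀ ^ 4) - ‖x‖ / t * r₀| := by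
  have hs2sq : Real.sqrt 2 ^ 2 = 2 := Real.sq_sqrt (by norm_num)
  have hs2nn : (0:ℝ) ≤ Real.sqrt 2 := Real.sqrt_nonneg 2
  have hs2 : Real.sqrt 2 < 2 := by nlinarith
  have hden : (0:ℝ) < 4 + a ^ 2 := by positivity
  have hb0 : 0 < b := ha.trans hab
  have ha2 : 2 < a := by
    have h := hab.trans_le hb
    rw [lt_div_iff₀ hden] at h
    nlinarith [mul_pos (show (0:ℝ) < 2 - Real.sqrt 2 by linarith) (pow_pos ha 3),
      mul_pos ha ha, mul_nonneg ha.le (mul_nonneg ha.le ha.le)]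
  have haq : 4 < a ^ 2 := by nlinarith
  have ha4 : 16 < a ^ 4 := by nlinarith
  have hc : (0:ℝ) < (a ^ 4 / 16 - 1) / (1 + b ^ 2 / 2) :=
    div_pos (by nlinarith) (by positivity)
  refine ⟨(a ^ 4 / 16 - 1) / (1 + b ^ 2 / 2), hc, ?_⟩
  intro t x r₀ ht hax hxb hr heq
  set s := ‖x‖ / t with hs
  have hs1 : a ≤ s := (le_div_iff₀ ht).2 (by linarith [hax])
  have hsb : s ≤ b := (div_le_iff₀ ht).2 (by linarith [hxb])
  set R := Real.sqrt (1 + r₀ ^ 4) with hR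
  have hRsq : R ^ 2 = 1 + r₀ ^ 4 := Real.sq_sqrt (by positivity)
  have hRpos : 0 < R := Real.sqrt_pos.2 (by positivity)
  have heq' : 2 * r₀ ^ 3 = s * R := by
    field_simp at heq
    linarith [heq]
  have hRgt : r₀ ^ 2 < R := by nlinarith
  have hra : a / 2 < r₀ := by nlinarith
  have hr1 : 1 < r₀ := by linarith
  have hr2 : 1 < r₀ ^ 2 := by nlinarith
  have hr4 : 1 < r₀ ^ 4 := by nlinarith
  have hRle2 : R ≤ Real.sqrt 2 * r₀ ^ 2 := by
    have hle : (1 + r₀ ^ 4) ≤ (Real.sqrt 2 * r₀ ^ 2) ^ 2 := by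
      rw [mul_pow, hs2sq]; nlinarith
    calc R ≤ Real.sqrt ((Real.sqrt 2 * r₀ ^ 2) ^ 2) := Real.sqrt_le_sqrt hle
    _ = Real.sqrt 2 * r₀ ^ 2 := Real.sqrt_sq (by positivity)
  have h1 : 2 * r₀ ^ 3 ≤ b * (Real.sqrt 2 * r₀ ^ 2) := by
    rw [heq']
    exact mul_le_mul hsb hRle2 hRpos.le hb0.le
  have h2 : 2 * r₀ ≤ Real.sqrt 2 * b := by nlinarith [pow_pos hr 2]
  have hrb : r₀ ^ 2 ≤ b ^ 2 / 2 := by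
    nlinarith [mul_self_le_mul_self (by positivity : (0:ℝ) ≤ 2 * r₀) h2]
  have hRle : R ≤ 1 + r₀ ^ 2 := by
    have hle : (1 + r₀ ^ 4) ≤ (1 + r₀ ^ 2) ^ 2 := by nlinarith [sq_nonneg r₀]
    calc R ≤ Real.sqrt ((1 + r₀ ^ 2) ^ 2) := Real.sqrt_le_sqrt hle
    _ = 1 + r₀ ^ 2 := Real.sqrt_sq (by positivity)
  have h9 : s * R * r₀ = 2 * r₀ ^ 3 * r₀ := by rw [heq']
  have hkey : (s * r₀ - R) * R = r₀ ^ 4 - 1 := by linear_combination h9 - hRsq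
  have hpos : 0 < s * r₀ - R := by nlinarith [hkey, hr4]
  have habs : |R - s * r₀| = s * r₀ - R := by
    rw [abs_of_neg (by linarith)]; ring
  rw [habs, div_le_iff₀ (by positivity)]
  have h5 : a ^ 2 / 4 ≤ r₀ ^ 2 := by nlinarith
  have h6 : a ^ 4 / 16 ≤ r₀ ^ 4 := by nlinarith
  have h7 : R ≤ 1 + b ^ 2 / 2 := by linarith
  have h8 : (s * r₀ - R) * R ≤ (s * r₀ - R) * (1 + b ^ 2 / 2) :=
    mul_le_mul_of_nonneg_left h7 hpos.le
  linarith [hkey, h6, h8]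
end
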